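/- Let U ⊆ ℍ^m ≅ ℝ^{4m} be open, let E be a finite-dimensional real vector space, let I, J, K : E → E be arbitrary ℝ-linear maps, and let u : U → E be a C² map such that at every x ∈ U the differential satisfies du_x(y) = I(du_x(i·y)) + J(du_x(j·y)) + K(du_x(k·y)) for all y ∈ ℍ^m, where i, j, k act on ℍ^m by componentwise left quaternion multiplication. Then u is harmonic on U: Σ_{ℓ=1}^{4m} ∂²u/∂x_ℓ² = 0 in U, where the second derivatives are taken along the standard orthonormal coordinates of ℝ^{4m}. (The constant-coefficient case of the Jacobian-structure computation for Δ u: the second order terms cancel by skew-symmetry.) -/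

import Mathlib

/-!
Differentiating the identity `du = I ∘ du ∘ i + J ∘ du ∘ j + K ∘ du ∘ k` gives the same identity
for the second derivative in its second slot, so `D²u(e, e) = I D²u(e, i e) + J D²u(e, j e) +
K D²u(e, k e)`. Summed over the units of one quaternion slot, each `∑ₜ D²u(eₜ, q eₜ)` vanishes for
`q ∈ {i, j, k}`: left multiplication by `q` pairs the units as `{1, q}` and `{p, q p}`, and since
`q (q p) = -p` each pair contributes `D²u(p, q p) - D²u(q p, p) = 0` by symmetry of `D²u`.
-/

open scoped Quaternion

/-- The quaternion units `1, i, j, k` as a function on `Fin 4`. -/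
noncomputable def quatUnit : Fin 4 → ℍ[ℝ] :=
  ![1, ⟨0, 1, 0, 0⟩, ⟨0, 0, 1, 0⟩, ⟨0, 0, 0, 1⟩]

/-- The quaternion unit `i`. -/
noncomputable def Quat.i : ℍ[ℝ] := ⟨0, 1, 0, 0⟩
/-- The quaternion unit `j`. -/
noncomputable def Quat.j : ℍ[ℝ] := ⟨0, 0, 1, 0⟩
/-- The quaternion unit `k`. -/
noncomputable def Quat.k : ℍ[ℝ] := ⟨0, 0, 0, 1⟩

/-- The standard basis vector of `ℍ^m` with the quaternion unit `quatUnit t` in slot `n`. -/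
noncomputable def stdBasisQ (m : ℕ) (n : Fin m) (t : Fin 4) : Fin m → ℍ[ℝ] :=
  Pi.single n (quatUnit t)

open Filter Topology

namespace Quat

lemma i_mul_i : i * i = -1 := by
  ext <;> simp only [Quaternion.re_mul, Quaternion.imI_mul, Quaternion.imJ_mul,
    Quaternion.imK_mul] <;> simp [i]

lemma j_mul_j : j * j = -1 := by
  ext <;> simp only [Quaternion.re_mul, Quaternion.imI_mul, Quaternion.imJ_mul,
    Quaternion.imK_mul] <;> simp [j]

lemma k_mul_k : k * k = -1 := by
  ext <;> simp only [Quaternion.re_mul, Quaternion.imI_mul, Quaternion.imJ_mul,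
    Quaternion.imK_mul] <;> simp [k]

lemma i_mul_j : i * j = k := by
  ext <;> simp only [Quaternion.re_mul, Quaternion.imI_mul, Quaternion.imJ_mul,
    Quaternion.imK_mul] <;> simp [i, j, k]

lemma j_mul_k : j * k = i := by
  ext <;> simp only [Quaternion.re_mul, Quaternion.imI_mul, Quaternion.imJ_mul,
    Quaternion.imK_mul] <;> simp [i, j, k]

lemma k_mul_i : k * i = j := by
  ext <;> simp only [Quaternion.re_mul, Quaternion.imI_mul, Quaternion.imJ_mul,
    Quaternion.imK_mul] <;> simp [i, j, k]

end Quat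

lemma quatUnit_eq : quatUnit = ![1, Quat.i, Quat.j, Quat.k] := rfl

lemma sum_quatUnit_eq_zero {M : Type*} [AddCommGroup M] {q : ℍ[ℝ]}
    (hq : q = Quat.i ∨ q = Quat.j ∨ q = Quat.k) {g : ℍ[ℝ] → M}
    (hg : ∀ p, g p + g (q * p) = 0) : ∑ t, g (quatUnit t) = 0 := by
  have h₁ := hg 1
  rw [mul_one] at h₁
  simp only [Fin.sum_univ_four, quatUnit_eq, Matrix.cons_val]
  rcases hq with rfl | rfl | rfl
  · have h₂ := hg Quat.j
    rw [Quat.i_mul_j] at h₂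
    linear_combination (norm := abel) h₁ + h₂
  · have h₂ := hg Quat.k
    rw [Quat.j_mul_k] at h₂
    linear_combination (norm := abel) h₁ + h₂
  · have h₂ := hg Quat.i
    rw [Quat.k_mul_i] at h₂
    linear_combination (norm := abel) h₁ + h₂

lemma mul_pi_single {m : ℕ} (q p : ℍ[ℝ]) (n : Fin m) :
    (fun l => q * (Pi.single n p : Fin m → ℍ[ℝ]) l) = Pi.single n (q * p) :=
  funext <| Pi.apply_single (fun _ => (q * ·)) (fun _ => mul_zero q) n p

lemma sum_apply_stdBasisQ_mul_eq_zero {m : ℕ} {E : Type*} [NormedAddCommGroup E]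
    [NormedSpace ℝ E] {S : (Fin m → ℍ[ℝ]) →L[ℝ] (Fin m → ℍ[ℝ]) →L[ℝ] E}
    (hS : ∀ a b, S a b = S b a) {q : ℍ[ℝ]} (hq : q = Quat.i ∨ q = Quat.j ∨ q = Quat.k)
    (n : Fin m) : ∑ t, S (stdBasisQ m n t) (fun l => q * stdBasisQ m n t l) = 0 := by
  have hq₂ : q * q = -1 := by
    rcases hq with rfl | rfl | rfl
    exacts [Quat.i_mul_i, Quat.j_mul_j, Quat.k_mul_k]
  simp only [stdBasisQ, mul_pi_single]
  refine sum_quatUnit_eq_zero (g := fun p => S (Pi.single n p) (Pi.single n (q * p))) hq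
    fun p => ?_
  rw [← mul_assoc, hq₂, neg_one_mul, Pi.single_neg, map_neg, hS, add_neg_cancel]

theorem ContinuousLinearMap.apply_fderiv_eq_of_eventuallyEq {𝕜 F G H : Type*}
    [NontriviallyNormedField 𝕜] [NormedAddCommGroup F] [NormedSpace 𝕜 F] [NormedAddCommGroup G]
    [NormedSpace 𝕜 G] [NormedAddCommGroup H] [NormedSpace 𝕜 H] {Φ Ψ : G →L[𝕜] H} {g : F → G}
    {x : F} (h : ∀ᶠ z in 𝓝 x, Φ (g z) = Ψ (g z)) (w : F) :
    Φ (fderiv 𝕜 g x w) = Ψ (fderiv 𝕜 g x w) := by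
  -- Without differentiability both sides are `Φ 0 = Ψ 0`, since `fderiv` is then `0`.
  by_cases hg : DifferentiableAt 𝕜 g x
  · have hΦ : HasFDerivAt (Φ ∘ g) (Φ.comp (fderiv 𝕜 g x)) x :=
      Φ.hasFDerivAt.comp x hg.hasFDerivAt
    have hΨ : HasFDerivAt (Φ ∘ g) (Ψ.comp (fderiv 𝕜 g x)) x :=
      (Ψ.hasFDerivAt.comp x hg.hasFDerivAt).congr_of_eventuallyEq h
    exact congr($(hΦ.unique hΨ) w)
  · simp [fderiv_zero_of_not_differentiableAt hg]

theorem fderiv_fderiv_apply_eq_of_triholomorphic {m : ℕ} {E : Type*} [NormedAddCommGroup E]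
    [NormedSpace ℝ E] [FiniteDimensional ℝ E] (I J K : E →ₗ[ℝ] E) {u : (Fin m → ℍ[ℝ]) → E}
    {x : Fin m → ℍ[ℝ]}
    (htri : ∀ᶠ z in 𝓝 x, ∀ y : Fin m → ℍ[ℝ], fderiv ℝ u z y
      = I (fderiv ℝ u z (fun n => Quat.i * y n)) + J (fderiv ℝ u z (fun n => Quat.j * y n))
        + K (fderiv ℝ u z (fun n => Quat.k * y n)))
    (w y : Fin m → ℍ[ℝ]) :
    fderiv ℝ (fderiv ℝ u) x w y
      = I (fderiv ℝ (fderiv ℝ u) x w (fun n => Quat.i * y n))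
        + J (fderiv ℝ (fderiv ℝ u) x w (fun n => Quat.j * y n))
        + K (fderiv ℝ (fderiv ℝ u) x w (fun n => Quat.k * y n)) := by
  let toCLM := LinearMap.toContinuousLinearMap (𝕜 := ℝ) (E := E) (F' := E)
  let apply := ContinuousLinearMap.apply ℝ E (E := Fin m → ℍ[ℝ])
  exact ContinuousLinearMap.apply_fderiv_eq_of_eventuallyEq (Φ := apply y)
    (Ψ := (toCLM I).comp (apply fun n => Quat.i * y n)
      + (toCLM J).comp (apply fun n => Quat.j * y n)
      + (toCLM K).comp (apply fun n => Quat.k * y n))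
    (htri.mono fun z hz => hz y) w

/-- a `C²` map `u : U ⊆ ℍ^m → E` whose differential is triholomorphic at every
point of the open set `U` (for arbitrary linear maps `I, J, K` on `E`) is harmonic on `U`:
the sum of its pure second derivatives along the standard orthonormal coordinates vanishes. -/
theorem stmt6 {m : ℕ} {E : Type*} [NormedAddCommGroup E] [NormedSpace ℝ E]
    [FiniteDimensional ℝ E]
    (I J K : E →ₗ[ℝ] E)
    (U : Set (Fin m → ℍ[ℝ])) (hU : IsOpen U)
    (u : (Fin m → ℍ[ℝ]) → E)
    (hu : ContDiffOn ℝ 2 u U)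
    (htri : ∀ x ∈ U, ∀ y : Fin m → ℍ[ℝ],
      fderiv ℝ u x y
        = I (fderiv ℝ u x (fun n => Quat.i * y n))
          + J (fderiv ℝ u x (fun n => Quat.j * y n))
          + K (fderiv ℝ u x (fun n => Quat.k * y n))) :
    ∀ x ∈ U,
      (∑ n : Fin m, ∑ t : Fin 4,
        fderiv ℝ (fun z => fderiv ℝ u z (stdBasisQ m n t)) x (stdBasisQ m n t)) = 0 := by
  intro x hx
  have hux : ContDiffAt ℝ 2 u x := (hu x hx).contDiffAt (hU.mem_nhds hx)
  have hS : ∀ a b, fderiv ℝ (fderiv ℝ u) x a b = fderiv ℝ (fderiv ℝ u) x b a :=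
    (hux.isSymmSndFDerivAt (by simp)).eq
  have hsecond (e : Fin m → ℍ[ℝ]) :
      fderiv ℝ (fun z => fderiv ℝ u z e) x e = fderiv ℝ (fderiv ℝ u) x e e := by
    have hdu : DifferentiableAt ℝ (fderiv ℝ u) x :=
      (hux.fderiv_right le_rfl).differentiableAt one_ne_zero
    simp [fderiv_clm_apply hdu (differentiableAt_const e)]
  have htriS (y : Fin m → ℍ[ℝ]) := fderiv_fderiv_apply_eq_of_triholomorphic I J K
    (eventually_of_mem (hU.mem_nhds hx) htri) y y
  simp only [hsecond, htriS, Finset.sum_add_distrib, ← map_sum,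
    sum_apply_stdBasisQ_mul_eq_zero hS, map_zero, add_zero, Finset.sum_const_zero,
    true_or, or_true]
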